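/- Let Ψ(t) = a e^{−(b−a)t} 1_{t>0} with 0 < a < b, and let α₁ < ⋯ < α_m be real numbers with m ≥ 2. Then ∫_ℝ Π_{i=1}^m Ψ(α_i − v) dv = (a/(m(b−a))) · Π_{i=2}^m Ψ(α_i − α₁). -/

import Mathlib

open MeasureTheory Real Set

/-- `Ψ(t) = a e^{−(b−a)t} 1_{t>0}`. -/
noncomputable def Psi (a b t : ℝ) : ℝ := if 0 < t then a * Real.exp (-((b - a) * t)) else 0

/-!
For `v < α₁` every factor `Ψ(αᵢ − v)` is on the exponential branch, and splitting
`αᵢ − v = (αᵢ − α₁) + (α₁ − v)` gives `Ψ(αᵢ − v) = Ψ(αᵢ − α₁) e^{−(b−a)(α₁ − v)}` for `i ≠ 1`.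
Hence the integrand is `a e^{−m(b−a)(α₁ − v)} ∏_{i ≥ 2} Ψ(αᵢ − α₁)` on `(−∞, α₁)`, while it vanishes
for `v ≥ α₁` because of the factor `Ψ(α₁ − v)`; integrating the exponential gives `1/(m(b−a))`.
-/

section Psi

variable {a b s t : ℝ}

lemma Psi_of_pos (ht : 0 < t) : Psi a b t = a * exp (-((b - a) * t)) := if_pos ht

lemma Psi_of_nonpos (ht : t ≤ 0) : Psi a b t = 0 := if_neg ht.not_gt

lemma Psi_add_of_pos (hs : 0 < s) (ht : 0 < t) :
    Psi a b (s + t) = Psi a b s * exp (-((b - a) * t)) := by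
  rw [Psi_of_pos (add_pos hs ht), Psi_of_pos hs, mul_assoc, ← exp_add]
  ring_nf

lemma prod_Psi_sub_of_lt {ι : Type*} [Fintype ι] [DecidableEq ι] {α : ι → ℝ} {j : ι}
    (hj : ∀ i ≠ j, α j < α i) {v : ℝ} (hv : v < α j) :
    ∏ i, Psi a b (α i - v)
      = a * exp (-(Fintype.card ι * (b - a) * (α j - v)))
          * ∏ i ∈ Finset.univ.erase j, Psi a b (α i - α j) := by
  have hshift : ∀ i ∈ Finset.univ.erase j,
      Psi a b (α i - v) = Psi a b (α i - α j) * exp (-((b - a) * (α j - v))) := by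
    intro i hi
    rw [← Psi_add_of_pos (sub_pos.2 (hj i (Finset.ne_of_mem_erase hi))) (sub_pos.2 hv)]
    ring_nf
  have hcard : Fintype.card ι = (Finset.univ.erase j).card + 1 :=
    (Finset.card_erase_add_one (Finset.mem_univ j)).symm
  have hexp : ∀ (n : ℕ) (x : ℝ), exp (-((n + 1 : ℕ) * x)) = exp (-x) * exp (-x) ^ n := by
    intro n x
    rw [← exp_nat_mul, ← exp_add]
    push_cast
    ring_nf
  rw [← Finset.mul_prod_erase _ _ (Finset.mem_univ j), Finset.prod_congr rfl hshift,
    Finset.prod_mul_distrib, Finset.prod_const, Psi_of_pos (sub_pos.2 hv), hcard,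
    mul_assoc _ (b - a), hexp]
  ring

end Psi

lemma integral_Iio_exp_neg_mul_sub {k : ℝ} (hk : 0 < k) (x : ℝ) :
    ∫ v in Iio x, exp (-(k * (x - v))) = 1 / k := by
  have hsplit : ∀ v, exp (-(k * (x - v))) = exp (-(k * x)) * exp (k * v) := by
    intro v
    rw [← exp_add]
    ring_nf
  simp_rw [hsplit]
  rw [integral_const_mul, setIntegral_congr_set Iio_ae_eq_Iic, integral_exp_mul_Iic hk,
    mul_div_assoc', ← exp_add, neg_add_cancel, exp_zero]

/-- for `0 < a < b` and `α₁ < ⋯ < α_m` with `m ≥ 2`,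
`∫_ℝ Π_{i=1}^m Ψ(α_i − v) dv = (a/(m(b−a))) Π_{i=2}^m Ψ(α_i − α₁)`. -/
theorem stmt9 (a b : ℝ) (hab : a < b) (m : ℕ) (hm : 2 ≤ m)
    (α : Fin m → ℝ) (hα : StrictMono α) :
    ∫ v : ℝ, ∏ i : Fin m, Psi a b (α i - v)
      = (a / (m * (b - a))) *
        ∏ i ∈ Finset.univ.filter (fun i : Fin m => i ≠ ⟨0, by omega⟩),
          Psi a b (α i - α ⟨0, by omega⟩) := by
  set j : Fin m := ⟨0, by omega⟩
  set P := ∏ i ∈ Finset.univ.erase j, Psi a b (α i - α j)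
  have hj : ∀ i ≠ j, α j < α i := fun i hi =>
    hα (Fin.lt_def.2 (Nat.pos_of_ne_zero fun h => hi (Fin.ext h)))
  have hk : (0 : ℝ) < m * (b - a) := mul_pos (by positivity) (sub_pos.2 hab)
  calc ∫ v : ℝ, ∏ i : Fin m, Psi a b (α i - v)
      = ∫ v in Iio (α j), ∏ i : Fin m, Psi a b (α i - v) :=
        (setIntegral_eq_integral_of_forall_compl_eq_zero fun v hv => Finset.prod_eq_zero
          (Finset.mem_univ j) (Psi_of_nonpos (sub_nonpos.2 (not_lt.1 hv)))).symm
    _ = ∫ v in Iio (α j), a * P * exp (-(m * (b - a) * (α j - v))) :=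
        setIntegral_congr_fun measurableSet_Iio fun v hv => by
          rw [prod_Psi_sub_of_lt hj hv, Fintype.card_fin]
          ring
    _ = (a / (m * (b - a))) * P := by
        rw [integral_const_mul, integral_Iio_exp_neg_mul_sub hk]
        ring
  rw [Finset.filter_ne']
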